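/- arXiv:2501.15746 — 3 statements merged into one kernel-verified Lean document; each statement's English description precedes it below -/
import Mathlib

section
/- Let F be a field and r ≥ 2 an integer. Let A = (a_{ij}) be an invertible r×r matrix over F whose characteristic polynomial has r distinct roots in F. Suppose w ∈ F and z = (z_1, …, z_{r-1}) ∈ F^{r-1} satisfy A·(z_1, …, z_{r-1}, 1)^T = w·(z_1, …, z_{r-1}, 1)^T (note w ≠ 0 since A is invertible). Let J be the (r-1)×(r-1) matrix over F with entries J_{ij} = w^{-1}(a_{ij} − a_{rj} z_i) for 1 ≤ i, j ≤ r-1. Then the two subspaces Δ := {(x, x) : x ∈ F^{r-1}} and Γ_J := {(x, Jx) : x ∈ F^{r-1}} of F^{r-1} × F^{r-1} intersect trivially, i.e., Δ ∩ Γ_J = {0}. -/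
/-!
Conjugating `A` by the unipotent matrix with last column `(z, 1)` makes it block lower
triangular with diagonal blocks `M` and `(w)`, where `M i j = a_{ij} - z_i a_{rj}`, so
`charpoly A = charpoly M * (X - w)`. As the roots of `charpoly A` are simple, `w` is not an
eigenvalue of `M`; since `J = w⁻¹ M` (and `J = 0` if `w = 0`, by `0⁻¹ = 0`), `1` is not an
eigenvalue of `J`, which is exactly `Δ ∩ Γ_J = 0`.
-/

open Polynomial Matrix

namespace Polynomial

variable {K : Type*} [CommRing K] [IsDomain K]

theorem nodup_roots_of_card_toFinset_eq_natDegree [DecidableEq K] {p : K[X]}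
    (h : p.roots.toFinset.card = p.natDegree) : p.roots.Nodup := by
  rw [← Multiset.toFinset_card_eq_card_iff_nodup]
  exact le_antisymm (Multiset.toFinset_card_le _) (h ▸ p.card_roots')

theorem eval_ne_zero_of_nodup_roots_mul_X_sub_C {q : K[X]} {a : K} (hq : q ≠ 0)
    (h : (q * (X - C a)).roots.Nodup) : q.eval a ≠ 0 := by
  rw [roots_mul (mul_ne_zero hq (X_sub_C_ne_zero a)), roots_X_sub_C, Multiset.nodup_add] at h
  intro ha
  exact Multiset.disjoint_singleton.mp h.2.2 ((mem_roots hq).mpr ha)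

end Polynomial

namespace Matrix

section CommRing

variable {α : Type*} [CommRing α] {n o : Type*} [Fintype n] [DecidableEq n] [Fintype o]
  [DecidableEq o]

theorem fromBlocks_conj_eq_of_mul_add_eq {P : Matrix n n α} {Q : Matrix n o α} {R : Matrix o n α}
    {S : Matrix o o α} {Z : Matrix n o α} (h : P * Z + Q = Z * (R * Z + S)) :
    fromBlocks 1 (-Z) 0 1 * fromBlocks P Q R S * fromBlocks 1 Z 0 1 =
      fromBlocks (P - Z * R) 0 R (R * Z + S) := by
  simp only [fromBlocks_multiply, Matrix.one_mul, Matrix.mul_one, Matrix.zero_mul,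
    Matrix.mul_zero, zero_add, add_zero, Matrix.neg_mul, ← sub_eq_add_neg]
  congr 1
  rw [Matrix.mul_add] at h
  rw [Matrix.sub_mul, Matrix.mul_assoc, ← sub_eq_zero.mpr h]
  abel

theorem charpoly_fromBlocks_of_mul_add_eq {P : Matrix n n α} {Q : Matrix n o α}
    {R : Matrix o n α} {S : Matrix o o α} {Z : Matrix n o α}
    (h : P * Z + Q = Z * (R * Z + S)) :
    (fromBlocks P Q R S).charpoly = (P - Z * R).charpoly * (R * Z + S).charpoly := by
  have hinv : fromBlocks 1 Z 0 1 * fromBlocks 1 (-Z) 0 1 = (1 : Matrix (n ⊕ o) (n ⊕ o) α) := by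
    simp [fromBlocks_multiply, fromBlocks_one]
  rw [← charpoly_fromBlocks_zero₁₂, ← fromBlocks_conj_eq_of_mul_add_eq h, Matrix.mul_assoc,
    charpoly_mul_comm, Matrix.mul_assoc, hinv, Matrix.mul_one]

theorem charpoly_eq_mul_X_sub_C_of_mulVec_snoc {m : ℕ} (A : Matrix (Fin (m + 1)) (Fin (m + 1)) α)
    {z : Fin m → α} {w : α}
    (h : A *ᵥ (Fin.snoc z 1 : Fin (m + 1) → α) = w • (Fin.snoc z 1 : Fin (m + 1) → α)) :
    A.charpoly = (A.submatrix Fin.castSucc Fin.castSucc -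
      vecMulVec z (fun j : Fin m ↦ A (Fin.last m) j.castSucc)).charpoly * (X - C w) := by
  have hrow (i : Fin (m + 1)) :
      ∑ j : Fin m, A i j.castSucc * z j + A i (Fin.last m) =
        w * (Fin.snoc z 1 : Fin (m + 1) → α) i := by
    simpa [mulVec, dotProduct, Fin.sum_univ_castSucc] using congrFun h i
  let e : Fin m ⊕ Fin 1 ≃ Fin (m + 1) := finSumFinEquiv
  let Z : Matrix (Fin m) (Fin 1) α := replicateCol (Fin 1) z
  let B := reindex e.symm e.symm A
  have he_inl (i : Fin m) : e (.inl i) = i.castSucc := rfl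
  have he_inr : e (.inr 0) = Fin.last m := rfl
  have hS : B.toBlocks₂₁ * Z + B.toBlocks₂₂ = scalar (Fin 1) w := by
    ext i j
    fin_cases i; fin_cases j
    simpa [B, Z, he_inl, he_inr, toBlocks₂₁, toBlocks₂₂, mul_apply] using hrow (Fin.last m)
  have hP : B.toBlocks₁₁ * Z + B.toBlocks₁₂ = Z * (B.toBlocks₂₁ * Z + B.toBlocks₂₂) := by
    rw [hS]
    ext i j
    fin_cases j
    simpa [B, Z, he_inl, he_inr, toBlocks₁₁, toBlocks₁₂, mul_apply, mul_comm] using hrow i.castSucc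
  rw [← charpoly_reindex e.symm A, ← fromBlocks_toBlocks (reindex e.symm e.symm A),
    charpoly_fromBlocks_of_mul_add_eq hP, hS]
  congr 1
  · congr 1
    ext i j
    simp [B, Z, he_inl, he_inr, toBlocks₁₁, toBlocks₂₁, vecMulVec_apply, mul_apply]
  · simp [scalar_apply, charpoly_diagonal]

end CommRing

section Field

variable {K : Type*} [Field K] {n : Type*} [Fintype n] [DecidableEq n]

theorem eq_zero_of_smul_inv_mulVec_eq_self {M : Matrix n n K} {w : K}
    (hM : (scalar n w - M).det ≠ 0) {x : n → K} (hx : (w⁻¹ • M) *ᵥ x = x) : x = 0 := by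
  rcases eq_or_ne w 0 with rfl | hw
  · simpa using hx.symm
  refine eq_zero_of_mulVec_eq_zero hM ?_
  rw [smul_mulVec, inv_smul_eq_iff₀ hw] at hx
  rw [sub_mulVec, hx, sub_eq_zero, scalar_apply, ← smul_one_eq_diagonal, smul_mulVec, one_mulVec]

end Field

end Matrix

theorem stmt0_general {F : Type*} [Field F] [DecidableEq F] (m : ℕ)
    (A : Matrix (Fin (m + 1)) (Fin (m + 1)) F)
    (hroots : (Matrix.charpoly A).roots.toFinset.card = m + 1)
    (w : F) (z : Fin m → F)
    (heig : A.mulVec (Fin.snoc z 1 : Fin (m + 1) → F) = w • (Fin.snoc z 1 : Fin (m + 1) → F))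
    (J : Matrix (Fin m) (Fin m) F)
    (hJ : ∀ i j : Fin m,
      J i j = w⁻¹ * (A i.castSucc j.castSucc - A (Fin.last m) j.castSucc * z i)) :
    {p : (Fin m → F) × (Fin m → F) | p.2 = p.1} ∩
      {p : (Fin m → F) × (Fin m → F) | p.2 = J.mulVec p.1} = {0} := by
  set M := A.submatrix Fin.castSucc Fin.castSucc -
    vecMulVec z (fun j : Fin m ↦ A (Fin.last m) j.castSucc)
  have hJM : J = w⁻¹ • M := by
    ext i j
    simp [M, hJ, vecMulVec_apply, mul_comm]
  have hfactor := charpoly_eq_mul_X_sub_C_of_mulVec_snoc A heig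
  have hnodup : A.charpoly.roots.Nodup := by
    refine nodup_roots_of_card_toFinset_eq_natDegree ?_
    rw [hroots, charpoly_natDegree_eq_dim, Fintype.card_fin]
  have hdet : (scalar (Fin m) w - M).det ≠ 0 := by
    rw [← eval_charpoly]
    exact eval_ne_zero_of_nodup_roots_mul_X_sub_C M.charpoly_monic.ne_zero (hfactor ▸ hnodup)
  ext ⟨x, y⟩
  simp only [Set.mem_inter_iff, Set.mem_ofPred_eq, Set.mem_singleton_iff, Prod.mk_eq_zero]
  constructor
  · rintro ⟨rfl, hfix⟩
    have hy : y = 0 := eq_zero_of_smul_inv_mulVec_eq_self hdet (hJM ▸ hfix.symm)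
    exact ⟨hy, hy⟩
  · rintro ⟨rfl, rfl⟩
    simp

/-- Let `F` be a field and `r = m+1 ≥ 2`. Let `A` be an invertible
`r × r` matrix over `F` whose characteristic polynomial has `r` distinct roots in `F`.
If `w ∈ F` and `z ∈ F^{r-1}` satisfy `A·(z,1)ᵀ = w·(z,1)ᵀ`, and `J` is the
`(r-1)×(r-1)` matrix with `J i j = w⁻¹ (a_{ij} - a_{rj} z_i)`, then the diagonal
`Δ = {(x,x)}` and the graph `Γ_J = {(x, Jx)}` intersect trivially in `F^{r-1} × F^{r-1}`. -/
theorem stmt0 {F : Type*} [Field F] [DecidableEq F] (m : ℕ) (hm : 1 ≤ m)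
    (A : Matrix (Fin (m + 1)) (Fin (m + 1)) F) (hA : IsUnit A.det)
    (hroots : (Matrix.charpoly A).roots.toFinset.card = m + 1)
    (w : F) (z : Fin m → F)
    (heig : A.mulVec (Fin.snoc z 1 : Fin (m + 1) → F) = w • (Fin.snoc z 1 : Fin (m + 1) → F))
    (J : Matrix (Fin m) (Fin m) F)
    (hJ : ∀ i j : Fin m,
      J i j = w⁻¹ * (A i.castSucc j.castSucc - A (Fin.last m) j.castSucc * z i)) :
    {p : (Fin m → F) × (Fin m → F) | p.2 = p.1} ∩
      {p : (Fin m → F) × (Fin m → F) | p.2 = J.mulVec p.1} = {0} :=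
  stmt0_general m A hroots w z heig J hJ
end

section
/- Let k ⊆ F be a field extension, r ≥ 1 an integer, and A = (a_{ij}) an r×r matrix with entries in k. Let z_1, …, z_{r-1} ∈ F be algebraically independent over k, and suppose there exists c ∈ F with A·(z_1, …, z_{r-1}, 1)^T = c·(z_1, …, z_{r-1}, 1)^T. Then A is a scalar matrix: A = a_{rr}·I_r, and c = a_{rr} ∈ k. -/
/-!
Put `Y = (X₁, …, X_{r-1}, 1)` over the polynomial ring `k[X₁, …, X_{r-1}]`. The entries of
`A Y` are affine-linear forms `ℓᵢ`, and since `(z, 1)` is an eigenvector of `A` with last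
coordinate `1`, the polynomials `ℓᵢ` and `ℓ_r · Yᵢ` agree at `z`; by algebraic independence
they are equal. An affine form has no quadratic terms, so comparing coefficients of `Xᵢ²`
kills the off-diagonal entries of the last row. Then `ℓ_r = a_rr`, i.e. `A Y = a_rr Y`, and
the monomials `X₁, …, X_{r-1}, 1` being linearly independent forces `A = a_rr · I`.
-/

open Matrix

namespace MvPolynomial

variable {R : Type*} [CommSemiring R] {m : ℕ}

variable (R m) in
noncomputable def affineCoords : Fin (m + 1) → MvPolynomial (Fin m) R := Fin.snoc X 1

@[simp]
theorem affineCoords_castSucc (l : Fin m) : affineCoords R m l.castSucc = X l :=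
  Fin.snoc_castSucc ..

@[simp]
theorem affineCoords_last : affineCoords R m (Fin.last m) = 1 :=
  Fin.snoc_last ..

variable (m) in
noncomputable def affineExponent : Fin (m + 1) → Fin m →₀ ℕ :=
  Fin.snoc (fun l => Finsupp.single l 1) 0

theorem affineExponent_injective : Function.Injective (affineExponent m) := by
  intro i j h
  induction i using Fin.lastCases <;> induction j using Fin.lastCases <;>
    simp_all [affineExponent, Finsupp.single_left_inj, eq_comm (a := (0 : Fin m →₀ ℕ))]

theorem affineCoords_eq_monomial (j : Fin (m + 1)) :
    affineCoords R m j = monomial (affineExponent m j) 1 := by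
  induction j using Fin.lastCases <;> simp [affineCoords, affineExponent, X]

theorem coeff_mulVec_affineCoords (A : Matrix (Fin (m + 1)) (Fin (m + 1)) R)
    (i : Fin (m + 1)) (n : Fin m →₀ ℕ) :
    coeff n ((A.map C *ᵥ affineCoords R m) i) =
      ∑ j, if affineExponent m j = n then A i j else 0 := by
  simp [mulVec, dotProduct, affineCoords_eq_monomial, coeff_sum, C_mul_monomial, coeff_monomial]

theorem coeff_affineExponent_mulVec_affineCoords (A : Matrix (Fin (m + 1)) (Fin (m + 1)) R)
    (i j : Fin (m + 1)) :
    coeff (affineExponent m j) ((A.map C *ᵥ affineCoords R m) i) = A i j := by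
  simp [coeff_mulVec_affineCoords, affineExponent_injective.eq_iff]

theorem coeff_single_two_mulVec_affineCoords (A : Matrix (Fin (m + 1)) (Fin (m + 1)) R)
    (i : Fin (m + 1)) (l : Fin m) :
    coeff (Finsupp.single l 2) ((A.map C *ᵥ affineCoords R m) i) = 0 := by
  refine (coeff_mulVec_affineCoords A i _).trans (Finset.sum_eq_zero fun j _ => if_neg ?_)
  induction j using Fin.lastCases <;>
    simp [affineExponent, Finsupp.single_eq_single_iff, eq_comm (a := (0 : Fin m →₀ ℕ))]

theorem mulVec_affineCoords_injective :
    Function.Injective fun A : Matrix (Fin (m + 1)) (Fin (m + 1)) R =>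
      A.map C *ᵥ affineCoords R m := by
  intro A B h
  ext i j
  simpa only [coeff_affineExponent_mulVec_affineCoords] using
    congrArg (coeff (affineExponent m j)) (congrFun h i)

theorem eq_smul_one_of_mulVec_affineCoords {A : Matrix (Fin (m + 1)) (Fin (m + 1)) R}
    (h : ∀ i, (A.map C *ᵥ affineCoords R m) i =
      (A.map C *ᵥ affineCoords R m) (Fin.last m) * affineCoords R m i) :
    A = A (Fin.last m) (Fin.last m) • 1 := by
  have hlast_row (l : Fin m) : A (Fin.last m) l.castSucc = 0 := by
    have := congrArg (coeff (Finsupp.single l 2)) (h l.castSucc)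
    rwa [coeff_single_two_mulVec_affineCoords, affineCoords_castSucc,
      show Finsupp.single l 2 = affineExponent m l.castSucc + Finsupp.single l 1 by
        simp [affineExponent, ← Finsupp.single_add],
      coeff_mul_X, coeff_affineExponent_mulVec_affineCoords, eq_comm] at this
  have hlast : (A.map C *ᵥ affineCoords R m) (Fin.last m) = C (A (Fin.last m) (Fin.last m)) := by
    simp [mulVec, dotProduct, Fin.sum_univ_castSucc, hlast_row]
  apply mulVec_affineCoords_injective
  funext i
  simp [h i, hlast, smul_one_eq_diagonal, mulVec_diagonal]

@[simp]
theorem aeval_affineCoords {S : Type*} [CommSemiring S] [Algebra R S] (z : Fin m → S)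
    (i : Fin (m + 1)) : aeval z (affineCoords R m i) = (Fin.snoc z 1 : Fin (m + 1) → S) i := by
  induction i using Fin.lastCases <;> simp

theorem aeval_mulVec_affineCoords {S : Type*} [CommSemiring S] [Algebra R S] (z : Fin m → S)
    (A : Matrix (Fin (m + 1)) (Fin (m + 1)) R) (i : Fin (m + 1)) :
    aeval z ((A.map C *ᵥ affineCoords R m) i) =
      (A.map (algebraMap R S) *ᵥ Fin.snoc z 1) i := by
  simp [mulVec, dotProduct, Fin.sum_univ_castSucc]

end MvPolynomial

/-- Let `k ⊆ F` be a field extension, `r = m+1 ≥ 1`, and `A` an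
`r × r` matrix over `k`. If `z_1, …, z_{r-1} ∈ F` are algebraically independent over `k`
and `A·(z,1)ᵀ = c·(z,1)ᵀ` over `F` for some `c ∈ F`, then `A` is the scalar matrix
`a_{rr}·I` and `c = a_{rr} ∈ k`. -/
theorem stmt3 {k F : Type*} [Field k] [Field F] [Algebra k F] (m : ℕ)
    (A : Matrix (Fin (m + 1)) (Fin (m + 1)) k) (z : Fin m → F)
    (hz : AlgebraicIndependent k z) (c : F)
    (heig : (A.map (algebraMap k F)).mulVec (Fin.snoc z 1 : Fin (m + 1) → F) = c • (Fin.snoc z 1 : Fin (m + 1) → F)) :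
    A = A (Fin.last m) (Fin.last m) • (1 : Matrix (Fin (m + 1)) (Fin (m + 1)) k) ∧
      c = algebraMap k F (A (Fin.last m) (Fin.last m)) := by
  have hc : (A.map (algebraMap k F) *ᵥ Fin.snoc z 1) (Fin.last m) = c := by
    simp [heig]
  have hA : A = A (Fin.last m) (Fin.last m) • 1 := by
    refine MvPolynomial.eq_smul_one_of_mulVec_affineCoords fun i => hz ?_
    simp only [map_mul, MvPolynomial.aeval_mulVec_affineCoords, MvPolynomial.aeval_affineCoords,
      hc, heig, Pi.smul_apply, smul_eq_mul]
  refine ⟨hA, ?_⟩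
  rw [← hc, hA]
  simp [smul_one_eq_diagonal, mulVec_diagonal]
end

section
/- Let K ⊆ L be a field extension, r ≥ 1 an integer, and A an r×r matrix with entries in K whose characteristic polynomial is irreducible over K. Suppose v ∈ L^r is a nonzero vector and λ ∈ L satisfies A·v = λ·v (viewing A as a matrix over L). Then the coordinates v_1, …, v_r of v are linearly independent over K. -/
open Polynomial Matrix

/-!
The `K`-linear map `φ w = ∑ i, w i • v i` turns `w ↦ w ᵥ* A` into multiplication by `λ`, so
`φ (c ᵥ* q(A)) = q(λ) • φ c` for every polynomial `q`. When `χ_A` is irreducible, every nonzero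
`c` is a cyclic vector for right multiplication by `A`: by Bézout with `χ_A`, no nonzero `q` of
degree `< r` kills `c`, so `q ↦ c ᵥ* q(A)` is injective on a space of dimension `r`, hence onto
`K^r`. A nonzero `c` in the kernel of `φ` would therefore force `φ = 0`, i.e. `v = 0`.
-/

namespace Matrix

variable {n K L : Type*} [Fintype n] [Field K] [Field L] [Algebra K L]

theorem linearCombination_vecMul_of_mulVec_eq_smul {A : Matrix n n K} {v : n → L} {lam : L}
    (heig : A.map (algebraMap K L) *ᵥ v = lam • v) (w : n → K) :
    Fintype.linearCombination K v (w ᵥ* A) = lam • Fintype.linearCombination K v w := by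
  have hrow : ∀ i, ∑ j, A i j • v j = lam * v i := fun i => by
    simpa [mulVec, dotProduct, Algebra.smul_def] using congrFun heig i
  simp only [Fintype.linearCombination_apply, vecMul, dotProduct, Finset.sum_smul, Finset.smul_sum]
  rw [Finset.sum_comm]
  refine Finset.sum_congr rfl fun i _ => ?_
  simp only [mul_smul, ← Finset.smul_sum, hrow, smul_eq_mul, mul_smul_comm]

variable [DecidableEq n]

theorem linearCombination_vecMul_aeval_of_mulVec_eq_smul {A : Matrix n n K} {v : n → L} {lam : L}
    (heig : A.map (algebraMap K L) *ᵥ v = lam • v) (w : n → K) (q : K[X]) :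
    Fintype.linearCombination K v (w ᵥ* aeval A q) =
      aeval lam q • Fintype.linearCombination K v w := by
  induction q using Polynomial.induction_on with
  | C a => simp [Algebra.algebraMap_eq_smul_one, vecMul_smul]
  | add p q hp hq => rw [map_add, vecMul_add, map_add, hp, hq, map_add, add_smul]
  | monomial k a ih =>
    rw [pow_succ, ← mul_assoc, map_mul, aeval_X, ← vecMul_vecMul,
      linearCombination_vecMul_of_mulVec_eq_smul heig, ih, smul_smul, map_mul (aeval lam) _ X,
      aeval_X, mul_comm]

theorem charpoly_dvd_of_vecMul_aeval_eq_zero {A : Matrix n n K} (hA : Irreducible A.charpoly)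
    {c : n → K} (hc : c ≠ 0) {q : K[X]} (hq : c ᵥ* aeval A q = 0) : A.charpoly ∣ q := by
  by_contra hdvd
  obtain ⟨a, b, hab⟩ := hA.coprime_iff_not_dvd.2 hdvd
  apply hc
  calc c = c ᵥ* aeval A (A.charpoly * a + q * b) := by
        rw [mul_comm _ a, mul_comm q, hab, map_one, vecMul_one]
    _ = 0 := by
        rw [map_add, map_mul, map_mul, vecMul_add, ← vecMul_vecMul c, ← vecMul_vecMul c,
          aeval_self_charpoly, hq, vecMul_zero, zero_vecMul, zero_vecMul, add_zero]

theorem exists_vecMul_aeval_eq_of_irreducible_charpoly {A : Matrix n n K}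
    (hA : Irreducible A.charpoly) {c : n → K} (hc : c ≠ 0) (w : n → K) :
    ∃ q : K[X], c ᵥ* aeval A q = w := by
  let T : degreeLT K (Fintype.card n) →ₗ[K] n → K :=
    vecMulBilin K K c ∘ₗ (aeval A).toLinearMap ∘ₗ (degreeLT K _).subtype
  have hT : Function.Injective T := by
    rw [← LinearMap.ker_eq_bot, Submodule.eq_bot_iff]
    rintro ⟨q, hq⟩ hTq
    have hdvd := charpoly_dvd_of_vecMul_aeval_eq_zero hA hc hTq
    rw [mem_degreeLT, ← A.charpoly_degree_eq_dim] at hq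
    simpa using eq_zero_of_dvd_of_degree_lt hdvd hq
  have hrank : Module.finrank K (degreeLT K (Fintype.card n)) = Module.finrank K (n → K) := by
    rw [(degreeLTEquiv K _).finrank_eq, Module.finrank_fin_fun, Module.finrank_fintype_fun_eq_card]
  obtain ⟨⟨q, _⟩, hq⟩ := (LinearMap.injective_iff_surjective_of_finrank_eq_finrank hrank).1 hT w
  exact ⟨q, hq⟩

end Matrix

theorem stmt5_general {K L : Type*} [Field K] [Field L] [Algebra K L] (r : ℕ)
    (A : Matrix (Fin r) (Fin r) K) (hirr : Irreducible (Matrix.charpoly A))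
    (v : Fin r → L) (hv : v ≠ 0) (lam : L)
    (heig : (A.map (algebraMap K L)).mulVec v = lam • v) :
    LinearIndependent K v := by
  rw [linearIndependent_iff_injective_fintypeLinearCombination, ← LinearMap.ker_eq_bot,
    Submodule.eq_bot_iff]
  intro c hc
  by_contra hc0
  apply hv
  ext j
  obtain ⟨q, hq⟩ := exists_vecMul_aeval_eq_of_irreducible_charpoly hirr hc0 (Pi.single j 1)
  simpa [hq, LinearMap.mem_ker.1 hc] using linearCombination_vecMul_aeval_of_mulVec_eq_smul heig c q

/-- Let `K ⊆ L` be a field extension, `r ≥ 1`, and `A` an `r × r`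
matrix over `K` whose characteristic polynomial is irreducible over `K`. If `v ∈ L^r`
is a nonzero eigenvector of `A` (viewed over `L`) with eigenvalue `λ ∈ L`, then the
coordinates of `v` are linearly independent over `K`. -/
theorem stmt5 {K L : Type*} [Field K] [Field L] [Algebra K L] (r : ℕ) (hr : 1 ≤ r)
    (A : Matrix (Fin r) (Fin r) K) (hirr : Irreducible (Matrix.charpoly A))
    (v : Fin r → L) (hv : v ≠ 0) (lam : L)
    (heig : (A.map (algebraMap K L)).mulVec v = lam • v) :
    LinearIndependent K v :=
  stmt5_general r A hirr v hv lam heig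
end
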